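/- arXiv:1609.06853 — 2 statements merged into one kernel-verified Lean document; each statement's English description precedes it below -/
import Mathlib

section
/- For n ≥ 2 and 2 ≤ k ≤ 3·n^{n-2} - 1, we have d(n,k) ≥ (n - ⌈(log(k+1) - log 3)/log n⌉ - 1)^2. -/
/-- `w` is a synchronizing word for the DFA with transition function `δ`. -/
def IsSyncWord {n k : ℕ} (δ : Fin k → Fin n → Fin n) (w : List (Fin k)) : Prop :=
  ∃ qs : Fin n, ∀ q : Fin n, w.foldl (fun s x => δ x s) q = qs

/-- The DFA is basic: distinct symbols act differently and no symbol is the identity. -/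
def IsBasic {n k : ℕ} (δ : Fin k → Fin n → Fin n) : Prop :=
  Function.Injective δ ∧ ∀ x : Fin k, δ x ≠ id

/-- Length of a shortest synchronizing word of the DFA `δ`. -/
noncomputable def shortestSync {n k : ℕ} (δ : Fin k → Fin n → Fin n) : ℕ :=
  sInf {L | ∃ w : List (Fin k), IsSyncWord δ w ∧ w.length = L}

/-- `d(n,k)`: the maximal shortest synchronizing word length over all synchronizing
basic DFAs with `n` states and `k` symbols. -/
noncomputable def dBound (n k : ℕ) : ℕ :=
  sSup {L | ∃ δ : Fin k → Fin n → Fin n,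
    IsBasic δ ∧ (∃ w, IsSyncWord δ w) ∧ shortestSync δ = L}

/-!
Inside `n` states, take a Černý automaton on `N = n - m` states, realised on `ZMod N` with the
rotation `p ↦ p + 1`, the merge `0 ↦ 1` and an idle letter, and add `m` tail states. The letter
with index `v` is coded by `v + 1 = 3 y + c` with `c < 3`: `c` chooses the action on the Černý
part and the base-`(N + m)` digits of `y < (N + m) ^ m` are offsets by which the tail states are
moved; the rotation also moves every tail state one step down, so that it eventually enters the
Černý part. For `m = ⌈log_n ((k + 1) / 3)⌉` this gives `k` distinct non-identity letters.

The Černý part is invariant, so every synchronizing word synchronizes it. A run from `p` ends in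
`p + #rotations + #merges(p)`, hence some start `p` has `#merges(p) ≡ -1 (mod N)`; since after a
merge it takes `N - 1` rotations to get back to `0`, such a word has length at least `(N - 1)^2`.
-/

inductive CernyLetter
  | idle
  | rotate
  | merge
  deriving DecidableEq

namespace CernyLetter

def ofFin3 : Fin 3 → CernyLetter := ![idle, rotate, merge]

theorem ofFin3_injective : Function.Injective ofFin3 := by decide

end CernyLetter

section Cerny

variable (N : ℕ)

def cernyStep : CernyLetter → ZMod N → ZMod N
  | .idle, p => p
  | .rotate, p => p + 1
  | .merge, p => if p = 0 then 1 else p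

def cernyRun (u : List CernyLetter) (p : ZMod N) : ZMod N :=
  u.foldl (fun p c => cernyStep N c p) p

def mergeCount : List CernyLetter → ZMod N → ℕ
  | [], _ => 0
  | c :: u, p => (if c = .merge ∧ p = 0 then 1 else 0) + mergeCount u (cernyStep N c p)

def cernyBlock : List CernyLetter := .merge :: List.replicate (N - 1) .rotate

def cernySyncWord : List CernyLetter := (List.replicate (N - 1) (cernyBlock N)).flatten

variable {N}

@[simp]
theorem cernyRun_nil (p : ZMod N) : cernyRun N [] p = p := rfl

@[simp]
theorem cernyRun_cons (c : CernyLetter) (u : List CernyLetter) (p : ZMod N) :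
    cernyRun N (c :: u) p = cernyRun N u (cernyStep N c p) := rfl

theorem cernyRun_append (u v : List CernyLetter) (p : ZMod N) :
    cernyRun N (u ++ v) p = cernyRun N v (cernyRun N u p) :=
  List.foldl_append

theorem cernyStep_injective [Fact (1 < N)] : Function.Injective (cernyStep N) := by
  intro a b h
  have h₀ := congrFun h 0
  have h₁ := congrFun h (-1)
  cases a <;> cases b <;> simp_all [cernyStep]

theorem cernyRun_eq_add_count_add_mergeCount (u : List CernyLetter) (p : ZMod N) :
    cernyRun N u p = p + u.count .rotate + mergeCount N u p := by
  induction u generalizing p with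
  | nil => simp [mergeCount]
  | cons c u ih =>
    cases c <;> simp only [cernyRun_cons, ih, mergeCount, cernyStep] <;> split_ifs <;>
      simp_all <;> ring

/-- `(-p).val` is the number of rotations leading from `p` to `0`; after each merge, `N - 1`
rotations are needed before the next one. -/
theorem mul_mergeCount_add_val_neg_le [Fact (1 < N)] (u : List CernyLetter) (p : ZMod N) :
    N * mergeCount N u p + (-p).val ≤ u.length + (N - 1) := by
  have hN : 1 < N := Fact.out
  induction u generalizing p with
  | nil => simpa [mergeCount] using Nat.le_sub_one_of_lt (ZMod.val_lt (-p))
  | cons c u ih =>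
    cases c with
    | idle =>
      have := ih p
      simp only [mergeCount, cernyStep, reduceCtorEq, false_and, if_false, zero_add,
        List.length_cons]
      omega
    | rotate =>
      have hneg : (-p).val ≤ (-(p + 1)).val + 1 :=
        calc (-p).val = (-(p + 1) + 1).val := by ring_nf
          _ ≤ (-(p + 1)).val + (1 : ZMod N).val := ZMod.val_add_le _ _
          _ = (-(p + 1)).val + 1 := by rw [ZMod.val_one]
      have := ih (p + 1)
      simp only [mergeCount, cernyStep, reduceCtorEq, false_and, if_false, zero_add,
        List.length_cons]
      omega
    | merge =>
      by_cases hp : p = 0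
      · have := ih 1
        simp only [ZMod.neg_val, one_ne_zero, if_false, ZMod.val_one] at this
        simp only [mergeCount, cernyStep, hp, and_self, if_true, neg_zero, ZMod.val_zero,
          List.length_cons, mul_add]
        omega
      · have := ih p
        simp only [mergeCount, cernyStep, hp, and_false, if_false, zero_add, List.length_cons]
        omega

theorem sq_le_length_of_cernyRun_eq [Fact (1 < N)] {u : List CernyLetter} {F : ZMod N}
    (h : ∀ p, cernyRun N u p = F) : (N - 1) ^ 2 ≤ u.length := by
  have hN : 1 < N := Fact.out
  set p := F - u.count .rotate + 1
  have hmerge : (mergeCount N u p : ZMod N) = -1 := by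
    linear_combination (cernyRun_eq_add_count_add_mergeCount u p).symm.trans (h p)
  have hmod : mergeCount N u p % N = N - 1 := by
    rw [← ZMod.val_natCast, hmerge, ZMod.neg_val, ZMod.val_one, if_neg one_ne_zero]
  have hM : N - 1 ≤ mergeCount N u p := hmod ▸ Nat.mod_le _ _
  have hsq : (N - 1) ^ 2 + (N - 1) = N * (N - 1) := by
    obtain ⟨M, rfl⟩ : ∃ M, N = M + 1 := ⟨N - 1, by omega⟩
    simp only [Nat.add_sub_cancel]
    ring
  have := calc (N - 1) ^ 2 + (N - 1) = N * (N - 1) := hsq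
    _ ≤ N * mergeCount N u p := Nat.mul_le_mul_left N hM
    _ ≤ u.length + (N - 1) := Nat.le_of_add_right_le (mul_mergeCount_add_val_neg_le u p)
  omega

theorem cernyRun_replicate_rotate (t : ℕ) (p : ZMod N) :
    cernyRun N (List.replicate t .rotate) p = p + t := by
  induction t generalizing p with
  | zero => simp
  | succ t ih => rw [List.replicate_succ, cernyRun_cons, ih, cernyStep]; push_cast; ring

theorem val_cernyRun_cernyBlock [Fact (1 < N)] (p : ZMod N) :
    (cernyRun N (cernyBlock N) p).val = p.val - 1 := by
  have hN : 1 ≤ N := (Fact.out : 1 < N).le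
  rw [cernyBlock, cernyRun_cons, cernyRun_replicate_rotate, Nat.cast_sub hN, Nat.cast_one,
    ZMod.natCast_self, cernyStep]
  split_ifs with hp
  · simp [hp]
  · have hp1 : (1 : ZMod N).val ≤ p.val := by
      rw [ZMod.val_one]
      exact Nat.one_le_iff_ne_zero.2 ((ZMod.val_ne_zero p).2 hp)
    rw [zero_sub, ← sub_eq_add_neg, ZMod.val_sub hp1, ZMod.val_one]

theorem val_cernyRun_flatten_replicate_cernyBlock [Fact (1 < N)] (t : ℕ) (p : ZMod N) :
    (cernyRun N (List.replicate t (cernyBlock N)).flatten p).val = p.val - t := by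
  induction t generalizing p with
  | zero => simp
  | succ t ih =>
    rw [List.replicate_succ, List.flatten_cons, cernyRun_append, ih, val_cernyRun_cernyBlock]
    omega

theorem cernyRun_cernySyncWord [Fact (1 < N)] (p : ZMod N) :
    cernyRun N (cernySyncWord N) p = 0 := by
  rw [← ZMod.val_eq_zero, cernySyncWord, val_cernyRun_flatten_replicate_cernyBlock]
  have := ZMod.val_lt p
  omega

end Cerny

abbrev ExtendedLetter (N m : ℕ) : Type := (Fin m → Fin (N + m)) × CernyLetter

section Extension

variable {N m : ℕ} [NeZero N]

variable (m) in
def cernyEmbed (p : ZMod N) : Fin (N + m) :=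
  Fin.castAdd m ((ZMod.finEquiv N).symm p)

def extendedStep (a : ExtendedLetter N m) : Fin (N + m) → Fin (N + m) :=
  Fin.addCases (fun i => cernyEmbed m (cernyStep N a.2 (ZMod.finEquiv N i)))
    (fun j => Fin.natAdd N j + a.1 j - if a.2 = .rotate then 1 else 0)

theorem cernyEmbed_injective : Function.Injective (cernyEmbed (N := N) m) :=
  (Fin.castAdd_injective N m).comp (ZMod.finEquiv N).symm.injective

theorem val_cernyEmbed_lt (p : ZMod N) : (cernyEmbed m p : ℕ) < N :=
  ((ZMod.finEquiv N).symm p).isLt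

theorem exists_cernyEmbed_eq {q : Fin (N + m)} (hq : (q : ℕ) < N) : ∃ p, cernyEmbed m p = q :=
  ⟨ZMod.finEquiv N (q.castLT hq), by simp [cernyEmbed]⟩

theorem extendedStep_cernyEmbed (a : ExtendedLetter N m) (p : ZMod N) :
    extendedStep a (cernyEmbed m p) = cernyEmbed m (cernyStep N a.2 p) := by
  simp [extendedStep, cernyEmbed]

theorem extendedStep_natAdd (a : ExtendedLetter N m) (j : Fin m) :
    extendedStep a (Fin.natAdd N j) = Fin.natAdd N j + a.1 j - if a.2 = .rotate then 1 else 0 :=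
  Fin.addCases_right j

theorem extendedStep_zero_idle : extendedStep ((0, .idle) : ExtendedLetter N m) = id := by
  funext q
  refine Fin.addCases (fun i => ?_) (fun j => ?_) q
  · simp [extendedStep, cernyEmbed, cernyStep]
  · simp [extendedStep_natAdd]

theorem extendedStep_injective [Fact (1 < N)] :
    Function.Injective (extendedStep : ExtendedLetter N m → _) := by
  intro a b h
  have hcerny : a.2 = b.2 := by
    refine cernyStep_injective (funext fun p : ZMod N => cernyEmbed_injective (m := m) ?_)
    rw [← extendedStep_cernyEmbed, ← extendedStep_cernyEmbed, h]
  have htail : a.1 = b.1 := by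
    funext j
    simpa [extendedStep_natAdd, hcerny] using congrFun h (Fin.natAdd N j)
  exact Prod.ext htail hcerny

theorem val_extendedStep_zero_rotate_lt (q : Fin (N + m)) :
    (extendedStep ((0, .rotate) : ExtendedLetter N m) q : ℕ) < max N q := by
  refine Fin.addCases (fun i => ?_) (fun j => ?_) q
  · have hi : Fin.castAdd m i = cernyEmbed m (ZMod.finEquiv N i) := by simp [cernyEmbed]
    rw [hi, extendedStep_cernyEmbed]
    exact lt_max_of_lt_left (val_cernyEmbed_lt _)
  · have hN : 0 < N := Nat.pos_of_neZero N
    have hj : Fin.natAdd N j ≠ 0 := Fin.ne_of_val_ne (by rw [Fin.val_natAdd, Fin.val_zero]; omega)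
    rw [extendedStep_natAdd]
    dsimp only
    rw [Pi.zero_apply, add_zero, if_pos rfl, Fin.val_sub_one_of_ne_zero hj, Fin.val_natAdd]
    omega

end Extension

section Letters

variable {n m k : ℕ}

def letterCode (hk : k ≤ 3 * n ^ m) (v : Fin k) : (Fin m → Fin n) × CernyLetter :=
  (finFunctionFinEquiv.symm ⟨v / 3, by omega⟩, CernyLetter.ofFin3 ⟨v % 3, by omega⟩)

theorem letterCode_injective (hk : k ≤ 3 * n ^ m) : Function.Injective (letterCode hk) := by
  intro v w h
  simp only [letterCode, Prod.mk.injEq, Equiv.apply_eq_iff_eq, Fin.mk.injEq] at h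
  have := CernyLetter.ofFin3_injective h.2
  simp only [Fin.mk.injEq] at this
  omega

theorem letterCode_of_lt_three [NeZero n] (hk : k ≤ 3 * n ^ m) {v : Fin k} (hv : (v : ℕ) < 3) :
    letterCode hk v = (0, CernyLetter.ofFin3 ⟨v, hv⟩) := by
  ext i
  · simp [letterCode, finFunctionFinEquiv_symm_apply_val, Nat.div_eq_of_lt hv]
  · simp [letterCode, Nat.mod_eq_of_lt hv]

end Letters

section Synchronization

variable {N m k : ℕ} [NeZero N]

theorem foldl_extendedStep_cernyEmbed (code : Fin k → ExtendedLetter N m) (w : List (Fin k))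
    (p : ZMod N) :
    w.foldl (fun q x => extendedStep (code x) q) (cernyEmbed m p)
      = cernyEmbed m (cernyRun N (w.map fun x => (code x).2) p) := by
  rw [cernyRun, List.foldl_map]
  exact List.foldl_hom _ fun p x => extendedStep_cernyEmbed (code x) p

theorem sq_le_length_of_isSyncWord [Fact (1 < N)] (code : Fin k → ExtendedLetter N m)
    {w : List (Fin k)} (hw : IsSyncWord (fun x => extendedStep (code x)) w) :
    (N - 1) ^ 2 ≤ w.length := by
  obtain ⟨qs, hqs⟩ := hw
  have hconst : ∀ p, cernyRun N (w.map fun x => (code x).2) p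
      = cernyRun N (w.map fun x => (code x).2) 0 := fun p =>
    cernyEmbed_injective <| (foldl_extendedStep_cernyEmbed code w p).symm.trans <|
      (hqs _).trans ((hqs _).symm.trans (foldl_extendedStep_cernyEmbed code w 0))
  simpa using sq_le_length_of_cernyRun_eq hconst

theorem val_foldl_replicate_lt (code : Fin k → ExtendedLetter N m) {r : Fin k}
    (hr : code r = (0, .rotate)) (t : ℕ) (q : Fin (N + m)) (hq : (q : ℕ) < N + t) :
    (((List.replicate t r).foldl (fun s x => extendedStep (code x) s) q : Fin (N + m)) : ℕ)
      < N := by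
  induction t generalizing q with
  | zero => simpa using hq
  | succ t ih =>
    rw [List.replicate_succ, List.foldl_cons]
    apply ih
    have := val_extendedStep_zero_rotate_lt q
    rw [← hr] at this
    omega

theorem isSyncWord_extendedStep [Fact (1 < N)] (code : Fin k → ExtendedLetter N m) {r b : Fin k}
    (hr : code r = (0, .rotate)) (hb : code b = (0, .merge)) :
    IsSyncWord (fun x => extendedStep (code x))
      (List.replicate m r ++ (List.replicate (N - 1) (b :: List.replicate (N - 1) r)).flatten) := by
  refine ⟨cernyEmbed m 0, fun q => ?_⟩
  obtain ⟨p, hp⟩ := exists_cernyEmbed_eq (val_foldl_replicate_lt code hr m q (by omega))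
  have hword : ((List.replicate (N - 1) (b :: List.replicate (N - 1) r)).flatten.map
      fun x => (code x).2) = cernySyncWord N := by
    simp [cernySyncWord, cernyBlock, List.map_flatten, List.map_replicate, hr, hb]
  rw [List.foldl_append, ← hp, foldl_extendedStep_cernyEmbed, hword, cernyRun_cernySyncWord]

end Synchronization

theorem le_shortestSync {n k L : ℕ} {δ : Fin k → Fin n → Fin n} (hsync : ∃ w, IsSyncWord δ w)
    (h : ∀ w, IsSyncWord δ w → L ≤ w.length) : L ≤ shortestSync δ := by
  obtain ⟨w, hw⟩ := hsync
  exact le_csInf ⟨w.length, w, hw, rfl⟩ (by rintro _ ⟨w, hw, rfl⟩; exact h w hw)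

theorem shortestSync_le_dBound {n k : ℕ} {δ : Fin k → Fin n → Fin n} (hδ : IsBasic δ)
    (hsync : ∃ w, IsSyncWord δ w) : shortestSync δ ≤ dBound n k :=
  le_csSup ((Set.finite_range shortestSync).subset
    (by rintro _ ⟨δ, -, -, rfl⟩; exact ⟨δ, rfl⟩)).bddAbove ⟨δ, hδ, hsync, rfl⟩

theorem sq_le_dBound_add (N m k : ℕ) (hN : 2 ≤ N) (hk : 2 ≤ k)
    (hkm : k + 1 ≤ 3 * (N + m) ^ m) : (N - 1) ^ 2 ≤ dBound (N + m) k := by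
  have : NeZero N := ⟨by omega⟩
  have : Fact (1 < N) := ⟨hN⟩
  set δ := fun x : Fin k => extendedStep (letterCode hkm x.succ)
  have hrotate : letterCode hkm (Fin.succ ⟨0, by omega⟩) = (0, .rotate) := by
    rw [letterCode_of_lt_three hkm (by simp)]; rfl
  have hmerge : letterCode hkm (Fin.succ ⟨1, by omega⟩) = (0, .merge) := by
    rw [letterCode_of_lt_three hkm (by simp)]; rfl
  have hsync : ∃ w, IsSyncWord δ w := ⟨_, isSyncWord_extendedStep _ hrotate hmerge⟩
  have hbasic : IsBasic δ := by
    refine ⟨extendedStep_injective.comp ((letterCode_injective hkm).comp (Fin.succ_injective k)),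
      fun x hx => Fin.succ_ne_zero x (letterCode_injective hkm (extendedStep_injective ?_))⟩
    rw [letterCode_of_lt_three hkm (v := 0) (by simp)]
    exact hx.trans extendedStep_zero_idle.symm
  exact (le_shortestSync hsync fun w hw => sq_le_length_of_isSyncWord _ hw).trans
    (shortestSync_le_dBound hbasic hsync)

theorem natCeil_logb_div_three_le_iff {n k m : ℕ} (hn : 1 < n) :
    ⌈Real.logb n ((k + 1) / 3)⌉₊ ≤ m ↔ k + 1 ≤ 3 * n ^ m := by
  rw [Nat.ceil_le, Real.logb_le_iff_le_rpow (by exact_mod_cast hn) (by positivity),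
    Real.rpow_natCast, div_le_iff₀ three_pos, mul_comm]
  norm_cast

/-- for n ≥ 2 and 2 ≤ k ≤ 3·n^{n-2} - 1,
`d(n,k) ≥ (n - ⌈(log(k+1) - log 3)/log n⌉ - 1)^2`. -/
theorem dBound_large_alphabet (n k : ℕ) (hn : 2 ≤ n) (hk1 : 2 ≤ k)
    (hk2 : k ≤ 3 * n ^ (n - 2) - 1) :
    (n - ⌈(Real.log (k + 1) - Real.log 3) / Real.log n⌉₊ - 1) ^ 2 ≤ dBound n k := by
  rw [← Real.log_div (by positivity) three_ne_zero, ← Real.logb]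
  generalize hm : ⌈Real.logb n ((k + 1) / 3)⌉₊ = m
  have hkm : k + 1 ≤ 3 * n ^ m := (natCeil_logb_div_three_le_iff hn).1 hm.le
  have hmn : m ≤ n - 2 := hm ▸ (natCeil_logb_div_three_le_iff hn).2 <| by
    have := Nat.pow_pos (n := n - 2) (by omega : 0 < n)
    omega
  obtain ⟨N, rfl⟩ : ∃ N, n = N + m := ⟨n - m, by omega⟩
  simpa using sq_le_dBound_add N m k (by omega) hk1 hkm
end

section
/- In the DFA A on n ≥ 3 states with symbols a,b,c,d,e: for every state q, qab = qc, qbb = qb, qcb = qc, qdb = qbc and qeb = qbc. Consequently, in any word over {a,b,c,d,e}, every occurrence of a factor xb with x ∈ {d,e} can be replaced by bc without changing the image of any state, and without changing the word length. -/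
/-!
Writing words left to right, `b` is the idempotent that moves only the state with index `1`
(to index `2`), and the other letters factor through `a` and `b`: `c = ab`, `d = ba`, and, once
`n ≥ 3`, `e = bc`. Every identity is then a consequence of `bb = b`: `cb = abb = ab = c`,
`db = bab = bc` and `eb = bcb = bc`.
-/

/-- Apply a word (list of transition functions) to a state, left to right. -/
def applyWord {α : Type*} (w : List (α → α)) (q : α) : α :=
  w.foldl (fun s f => f s) q

/- Symbols of the DFA `A` on `Fin n` (state `i+1` of `{1,...,n}` is index `i`,
`n+1` interpreted as `1`, i.e. addition cyclic). -/
def mapA (n : ℕ) [NeZero n] : Fin n → Fin n := fun q => q + 1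
def mapB (n : ℕ) [NeZero n] : Fin n → Fin n := fun q =>
  if q = 0 then 0 else if q = 1 then 2 else if q = 2 then 2 else q
def mapC (n : ℕ) [NeZero n] : Fin n → Fin n := fun q =>
  if q = 0 then 2 else if q = 1 then 2 else q + 1
def mapD (n : ℕ) [NeZero n] : Fin n → Fin n := fun q =>
  if q = 0 then 1 else if q = 1 then 3 else if q = 2 then 3 else q + 1
def mapE (n : ℕ) [NeZero n] : Fin n → Fin n := fun q =>
  if q = 0 then 2 else if q = 1 then 3 else if q = 2 then 3 else q + 1

theorem applyWord_append {α : Type*} (u v : List (α → α)) (q : α) :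
    applyWord (u ++ v) q = applyWord v (applyWord u q) :=
  List.foldl_append

theorem applyWord_append_append_congr {α : Type*} {w w' : List (α → α)}
    (h : ∀ q, applyWord w q = applyWord w' q) (u v : List (α → α)) (q : α) :
    applyWord (u ++ w ++ v) q = applyWord (u ++ w' ++ v) q := by
  simp only [applyWord_append, h]

section
open Fin.CommRing
variable (n : ℕ) [NeZero n] (q : Fin n)

theorem mapB_apply : mapB n q = if q = 1 then 2 else q := by
  unfold mapB
  split_ifs with h0 h1 <;> subst_vars
  · exact eq_of_zero_eq_one h1 _ _
  all_goals rfl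

theorem mapB_mapB : mapB n (mapB n q) = mapB n q := by
  by_cases h : q = 1 <;> simp [mapB_apply, h]

theorem mapB_mapA : mapB n (mapA n q) = mapC n q := by
  simp only [mapB_apply, mapA, mapC, add_eq_right]
  split_ifs <;> subst_vars
  · rfl
  · exact one_add_one_eq_two
  · rfl

theorem mapA_mapB : mapA n (mapB n q) = mapD n q := by
  simp only [mapB_apply, mapA, mapD]
  split_ifs with _ h10 <;> subst_vars
  · exact eq_of_zero_eq_one h10.symm _ _
  · exact two_add_one_eq_three
  · exact zero_add 1
  · exact two_add_one_eq_three
  · rfl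

theorem mapC_mapB (hn : 3 ≤ n) : mapC n (mapB n q) = mapE n q := by
  have h10 : (1 : Fin n) ≠ 0 := by simp [Fin.ext_iff, Nat.mod_eq_of_lt (by omega : 1 < n)]
  have h20 : (2 : Fin n) ≠ 0 := by simp [Fin.ext_iff, Nat.mod_eq_of_lt (by omega : 2 < n)]
  have h21 : (2 : Fin n) ≠ 1 := by
    simp [Fin.ext_iff, Nat.mod_eq_of_lt (by omega : 2 < n), Nat.mod_eq_of_lt (by omega : 1 < n)]
  simp only [mapB_apply, mapC, mapE]
  split_ifs <;> subst_vars <;> first | rfl | exact two_add_one_eq_three | contradiction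

theorem mapB_mapC : mapB n (mapC n q) = mapC n q := by
  rw [← mapB_mapA, mapB_mapB]

theorem mapB_mapD : mapB n (mapD n q) = mapC n (mapB n q) := by
  rw [← mapA_mapB, mapB_mapA]

theorem mapB_mapE (hn : 3 ≤ n) : mapB n (mapE n q) = mapC n (mapB n q) := by
  rw [← mapC_mapB n q hn, mapB_mapC]

end

/-- in `A` (n ≥ 3): `qab = qc`, `qbb = qb`, `qcb = qc`, `qdb = qbc`,
`qeb = qbc` for every state `q`; consequently every factor `xb` with `x ∈ {d,e}`
may be replaced by `bc` without changing the image of any state or the word length. -/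
theorem factor_replacement (n : ℕ) (hn : 3 ≤ n) [NeZero n] :
    (∀ q : Fin n,
      mapB n (mapA n q) = mapC n q ∧
      mapB n (mapB n q) = mapB n q ∧
      mapB n (mapC n q) = mapC n q ∧
      mapB n (mapD n q) = mapC n (mapB n q) ∧
      mapB n (mapE n q) = mapC n (mapB n q)) ∧
    ∀ x : Fin n → Fin n, (x = mapD n ∨ x = mapE n) →
      ∀ u v : List (Fin n → Fin n),
        (u ++ [x, mapB n] ++ v).length = (u ++ [mapB n, mapC n] ++ v).length ∧
        ∀ q : Fin n,
          applyWord (u ++ [x, mapB n] ++ v) q = applyWord (u ++ [mapB n, mapC n] ++ v) q := by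
  refine ⟨fun q => ⟨mapB_mapA n q, mapB_mapB n q, mapB_mapC n q, mapB_mapD n q,
    mapB_mapE n q hn⟩, ?_⟩
  rintro x hx u v
  refine ⟨by simp, applyWord_append_append_congr (fun q => ?_) u v⟩
  rcases hx with rfl | rfl
  exacts [mapB_mapD n q, mapB_mapE n q hn]
end
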